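/- arXiv:1401.2236 — 4 statements merged into one kernel-verified Lean document; each statement's English description precedes it below -/
import Mathlib

section
/- For every integer n ≥ 1, 0 < b_n ≤ 1/(n(n+1)). -/
/-!
Rewritten, the recurrence says `n b_n + ∑_{1 ≤ j < n} b_j / (n + 1 - j) = 1 / (n + 1)` for all
`n ≥ 1`, so once the `b_j` are positive the upper bound `n b_n ≤ 1 / (n + 1)` is immediate.
Positivity goes by strong induction: for `1 ≤ j < n` the term `b_j / (n + 2 - j)` of the identity
at `n + 1` is at most `n / (n + 1)` times the term `b_j / (n + 1 - j)` at `n`, and substituting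
the identity at `n` leaves
`(n + 1) b_{n+1} ≥ 1 / ((n + 2)(n + 1)²) + (n² / (n + 1) - 1 / 2) b_n > 0`.
-/

open Finset

def ConvolutionIdentity (b : ℕ → ℝ) : Prop :=
  ∀ n : ℕ, 1 ≤ n → n * b n + ∑ j ∈ Ico 1 n, b j / ((n : ℝ) + 1 - j) = 1 / (n + 1)

lemma sum_range_sub_div_eq_sum_Ico (f : ℕ → ℝ) (n : ℕ) :
    ∑ k ∈ range (n - 1), f (n - k - 1) / ((k : ℝ) + 2) =
      ∑ j ∈ Ico 1 n, f j / ((n : ℝ) + 1 - j) := by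
  refine sum_nbij' (fun k ↦ n - k - 1) (fun j ↦ n - j - 1) ?_ ?_ ?_ ?_ ?_ <;>
    simp only [mem_range, mem_Ico]
  all_goals try (intros; omega)
  intro k hk
  rw [Nat.cast_sub (by omega), Nat.cast_sub (by omega)]
  push_cast
  ring_nf

lemma convolutionIdentity_of_recurrence {b : ℕ → ℝ} (hb1 : b 1 = 1 / 2)
    (hb : ∀ n : ℕ, 2 ≤ n →
      b n = 1 / n * (1 / (n + 1) - ∑ k ∈ range (n - 1), b (n - k - 1) / ((k : ℝ) + 2))) :
    ConvolutionIdentity b := by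
  intro n hn
  obtain rfl | hn2 := hn.eq_or_lt
  · simp [hb1]
    norm_num
  · have hn0 : (n : ℝ) ≠ 0 := by positivity
    rw [hb n hn2, ← sum_range_sub_div_eq_sum_Ico]
    field_simp
    ring

lemma div_add_two_sub_le_mul_div {x n j : ℝ} (hx : 0 ≤ x) (hj : 1 ≤ j) (hjn : j < n + 1) :
    x / (n + 2 - j) ≤ n / (n + 1) * (x / (n + 1 - j)) := by
  rw [div_mul_div_comm, div_le_div_iff₀ (by linarith) (by nlinarith)]
  nlinarith [mul_nonneg hx (sub_nonneg.2 hj)]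

lemma sum_Ico_div_add_two_sub_le {b : ℕ → ℝ} {n : ℕ} (hb : ∀ j ∈ Ico 1 n, 0 ≤ b j) :
    ∑ j ∈ Ico 1 n, b j / ((n : ℝ) + 2 - j) ≤
      n / (n + 1) * ∑ j ∈ Ico 1 n, b j / ((n : ℝ) + 1 - j) := by
  rw [mul_sum]
  refine sum_le_sum fun j hj ↦ div_add_two_sub_le_mul_div (hb j hj) ?_ ?_ <;>
    rw [mem_Ico] at hj <;> norm_cast <;> omega

namespace ConvolutionIdentity

variable {b : ℕ → ℝ}

lemma pos_succ_of_forall_pos (hrec : ConvolutionIdentity b) {n : ℕ} (hn : 1 ≤ n)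
    (hpos : ∀ j ∈ Icc 1 n, 0 < b j) : 0 < b (n + 1) := by
  have hbn : 0 < b n := hpos n (by simp [hn])
  have hrec_succ := hrec (n + 1) (by omega)
  rw [sum_Ico_succ_top hn] at hrec_succ
  push_cast at hrec_succ
  rw [show (n : ℝ) + 1 + 1 - n = 2 by ring] at hrec_succ
  have hsum : ∑ j ∈ Ico 1 n, b j / ((n : ℝ) + 1 + 1 - j) ≤
      n / (n + 1) * (1 / (n + 1) - n * b n) := by
    rw [← hrec n hn, add_sub_cancel_left, add_assoc, one_add_one_eq_two]
    exact sum_Ico_div_add_two_sub_le fun j hj ↦ (hpos j (Ico_subset_Icc_self hj)).le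
  have hgap : 1 / ((n : ℝ) + 1 + 1) - n / (n + 1) * (1 / (n + 1)) =
      1 / ((n + 2) * (n + 1) ^ 2) := by
    field_simp
    ring
  have hcoef : 1 / 2 ≤ (n : ℝ) / (n + 1) * n := by
    rw [div_mul_eq_mul_div, le_div_iff₀ (by positivity)]
    nlinarith [(Nat.one_le_cast (α := ℝ)).2 hn]
  have hstep : 0 < ((n : ℝ) + 1) * b (n + 1) := by
    nlinarith [mul_le_mul_of_nonneg_right hcoef hbn.le,
      (by positivity : (0 : ℝ) < 1 / ((n + 2) * (n + 1) ^ 2))]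
  exact pos_of_mul_pos_right hstep (by positivity)

lemma pos (hrec : ConvolutionIdentity b) : ∀ n, 1 ≤ n → 0 < b n := by
  intro n
  induction n using Nat.strong_induction_on with
  | _ n ih =>
    intro hn
    obtain rfl | ⟨m, hm, rfl⟩ : n = 1 ∨ ∃ m, 1 ≤ m ∧ n = m + 1 := by
      rcases n with _ | _ | m <;> simp_all
    · have hb1 : b 1 = 1 / 2 := by simpa [one_add_one_eq_two] using hrec 1 le_rfl
      rw [hb1]
      norm_num
    · refine hrec.pos_succ_of_forall_pos hm fun j hj ↦ ?_
      obtain ⟨hj1, hjm⟩ := mem_Icc.1 hj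
      exact ih j (by omega) hj1

lemma mul_le_one_div_add_one (hrec : ConvolutionIdentity b) {n : ℕ} (hn : 1 ≤ n) :
    n * b n ≤ 1 / (n + 1) := by
  rw [← hrec n hn, le_add_iff_nonneg_right]
  refine sum_nonneg fun j hj ↦ div_nonneg (hrec.pos j ?_).le ?_ <;>
    rw [mem_Ico] at hj
  · exact hj.1
  · have : (j : ℝ) < n := by exact_mod_cast hj.2
    linarith

end ConvolutionIdentity

/-- For every integer `n ≥ 1`, `0 < b n ≤ 1/(n(n+1))`. -/
theorem b_pos_and_le (b : ℕ → ℝ) (hb1 : b 1 = 1 / 2)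
    (hb : ∀ n : ℕ, 2 ≤ n →
      b n = (1 / (n : ℝ)) * (1 / ((n : ℝ) + 1) -
        ∑ k ∈ Finset.range (n - 1), b (n - k - 1) / ((k : ℝ) + 2)))
    (n : ℕ) (hn : 1 ≤ n) :
    0 < b n ∧ b n ≤ 1 / ((n : ℝ) * ((n : ℝ) + 1)) := by
  have hrec := convolutionIdentity_of_recurrence hb1 hb
  refine ⟨hrec.pos n hn, ?_⟩
  have hmul := hrec.mul_le_one_div_add_one hn
  rw [le_div_iff₀ (by positivity)] at hmul ⊢
  linarith
end

section
/- The sequence of ratios b_{n+1}/b_n converges to 1 as n → ∞. -/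
/-!
Shifting to `a n = b (n + 1)` turns the recurrence into a convolution identity. Keeping only the
`a 0 = 1/2` term of the convolution gives `a (n + 1) ≤ 1 / (2 (n + 2) (n + 3))` once the earlier
terms are nonnegative; feeding these upper bounds back in gives
`(n + 3) (n + 4) a (n + 2) ≥ (1/2 - recipConv n) / 2`, where
`recipConv n = ∑_{p+q=n} 1 / ((p + 2) (q + 2))` is always `< 1/2` and tends to `0` (it is at most
twice a Cesàro mean of `1 / (k + 2)`). Hence all terms are positive and `a n` is of exact
order `1 / n²`. Subtracting consecutive recurrences,
`(n + 3) a (n + 2) - (n + 2) a (n + 1) = O(1 / n²)`; dividing by `(n + 3) a (n + 1)`, of order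
`1 / n`, gives `a (n + 2) / a (n + 1) - 1 = O(1 / n)`.
-/

open Finset Filter Topology

theorem Finset.Nat.sum_antidiagonal_add_swap {R : Type*} [NonAssocSemiring R] (g : ℕ → R)
    (n : ℕ) :
    ∑ x ∈ antidiagonal n, (g x.1 + g x.2) = 2 * ∑ k ∈ range (n + 1), g k := by
  rw [sum_add_distrib, two_mul]
  have hswap : ∑ x ∈ antidiagonal n, g x.2 = ∑ x ∈ antidiagonal n, g x.1 :=
    Nat.sum_antidiagonal_swap (f := fun x => g x.1)
  rw [hswap, Nat.sum_antidiagonal_eq_sum_range_succ (fun i _ => g i)]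

theorem sum_range_inv_add_one_sq_le_two (n : ℕ) :
    ∑ k ∈ range n, 1 / ((k : ℝ) + 1) ^ 2 ≤ 2 := by
  have h := sum_Ioo_inv_sq_le (α := ℝ) 0 (n + 1)
  rw [← Finset.Ico_add_one_left_eq_Ioo, sum_Ico_eq_sum_range] at h
  simpa [add_comm] using h

theorem sum_range_one_div_add_two_mul_add_three (n : ℕ) :
    ∑ k ∈ range n, 1 / (((k : ℝ) + 2) * (k + 3)) = 1 / 2 - 1 / (n + 2) := by
  induction n with
  | zero => norm_num
  | succ n ih =>
    rw [sum_range_succ, ih]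
    push_cast
    field_simp
    ring

/-- With `c j = 1 / (j + 1)` this reads `n a_n + (a ⋆ c)_n = c_(n+1)`; for `a n = b (n + 1)` the
case `n = 0` is `b 1 = 1/2` and the case `n + 1` is the recurrence for `b (n + 2)`. -/
def ConvRec (a : ℕ → ℝ) : Prop :=
  ∀ n : ℕ, (n : ℝ) * a n + ∑ x ∈ antidiagonal n, a x.1 / (x.2 + 1) = 1 / (n + 2)

theorem convRec_of_recurrence {b : ℕ → ℝ} (hb1 : b 1 = 1 / 2)
    (hb : ∀ n : ℕ, 2 ≤ n →
      b n = (1 / (n : ℝ)) * (1 / ((n : ℝ) + 1) -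
        ∑ k ∈ Finset.range (n - 1), b (n - k - 1) / ((k : ℝ) + 2))) :
    ConvRec (fun n => b (n + 1)) := by
  rintro (_ | n)
  · simp [hb1]
  have hreindex : ∑ k ∈ range (n + 2 - 1), b (n + 2 - k - 1) / ((k : ℝ) + 2)
      = ∑ x ∈ antidiagonal n, b (x.1 + 1) / ((x.2 : ℝ) + 2) := by
    rw [← Nat.sum_antidiagonal_swap]
    simp only [Prod.fst_swap, Prod.snd_swap]
    rw [Nat.sum_antidiagonal_eq_sum_range_succ (fun i j => b (j + 1) / ((i : ℝ) + 2))]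
    exact sum_congr rfl fun k hk => by
      rw [mem_range] at hk
      rw [show n + 2 - k - 1 = n - k + 1 by omega]
  have hrec := hb (n + 2) (by omega)
  rw [hreindex] at hrec
  have hshift : ∑ x ∈ antidiagonal n, b (x.1 + 1) / (((x.2 + 1 : ℕ) : ℝ) + 1)
      = ∑ x ∈ antidiagonal n, b (x.1 + 1) / ((x.2 : ℝ) + 2) :=
    sum_congr rfl fun x _ => by push_cast; ring_nf
  rw [Nat.sum_antidiagonal_succ', hshift]
  dsimp only
  rw [show n + 1 + 1 = n + 2 from rfl, hrec]
  push_cast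
  field_simp
  ring

noncomputable def recipConv (n : ℕ) : ℝ :=
  ∑ x ∈ antidiagonal n, 1 / (((x.1 : ℝ) + 2) * (x.2 + 2))

theorem recipConv_lt_half (n : ℕ) : recipConv n < 1 / 2 := by
  have hterm :
      ∀ x ∈ antidiagonal n, 1 / (((x.1 : ℝ) + 2) * (x.2 + 2)) ≤ 1 / (2 * (n + 2)) := by
    intro x hx
    have hsum : (x.1 : ℝ) + x.2 = n := by exact_mod_cast mem_antidiagonal.1 hx
    apply one_div_le_one_div_of_le (by positivity)
    nlinarith [mul_nonneg (Nat.cast_nonneg (α := ℝ) x.1) (Nat.cast_nonneg (α := ℝ) x.2)]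
  calc recipConv n ≤ ∑ _x ∈ antidiagonal n, 1 / (2 * ((n : ℝ) + 2)) := sum_le_sum hterm
    _ = (n + 1) / (2 * (n + 2)) := by
        rw [sum_const, Nat.card_antidiagonal, nsmul_eq_mul]; push_cast; ring
    _ < 1 / 2 := by rw [div_lt_div_iff₀ (by positivity) (by norm_num)]; linarith

theorem recipConv_eq (n : ℕ) :
    recipConv n = 2 / (n + 4) * ∑ k ∈ range (n + 1), 1 / ((k : ℝ) + 2) := by
  have hsplit : ∀ x ∈ antidiagonal n, 1 / (((x.1 : ℝ) + 2) * (x.2 + 2))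
      = 1 / ((n : ℝ) + 4) * (1 / ((x.1 : ℝ) + 2) + 1 / (x.2 + 2)) := by
    intro x hx
    have hsum : (n : ℝ) = x.1 + x.2 := by exact_mod_cast (mem_antidiagonal.1 hx).symm
    rw [hsum]
    field_simp
    ring
  rw [recipConv, sum_congr rfl hsplit, ← mul_sum,
    Nat.sum_antidiagonal_add_swap (fun k => 1 / ((k : ℝ) + 2))]
  ring

theorem tendsto_recipConv : Tendsto recipConv atTop (𝓝 0) := by
  have hnull : Tendsto (fun k : ℕ => 1 / ((k : ℝ) + 2)) atTop (𝓝 0) :=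
    tendsto_const_nhds.div_atTop (tendsto_natCast_atTop_atTop.atTop_add tendsto_const_nhds)
  have hmean := (hnull.cesaro.comp (tendsto_add_atTop_nat 1)).const_mul 2
  rw [mul_zero] at hmean
  refine squeeze_zero (fun n => ?_) (fun n => ?_) hmean
  · unfold recipConv; positivity
  · rw [recipConv_eq]
    simp only [Function.comp_apply, Nat.cast_add_one]
    rw [← mul_assoc]
    gcongr
    rw [div_eq_mul_inv]
    gcongr
    linarith

namespace ConvRec

variable {a : ℕ → ℝ}

theorem zero (h : ConvRec a) : a 0 = 1 / 2 := by
  simpa using h 0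

theorem succ (h : ConvRec a) (n : ℕ) :
    ((n : ℝ) + 2) * a (n + 1) + ∑ x ∈ antidiagonal n, a x.1 / (x.2 + 2) = 1 / (n + 3) := by
  have hrec := h (n + 1)
  rw [Nat.sum_antidiagonal_succ'] at hrec
  have hshift : ∑ x ∈ antidiagonal n, a x.1 / (((x.2 + 1 : ℕ) : ℝ) + 1)
      = ∑ x ∈ antidiagonal n, a x.1 / (x.2 + 2) :=
    sum_congr rfl fun x _ => by push_cast; ring_nf
  rw [hshift] at hrec
  push_cast at hrec
  convert hrec using 1 <;> ring

theorem one (h : ConvRec a) : a 1 = 1 / 24 := by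
  have hrec := h.succ 0
  simp only [Nat.antidiagonal_zero, sum_singleton, h.zero] at hrec
  norm_num at hrec
  linarith

theorem succ_le_of_nonneg (h : ConvRec a) (n : ℕ) (hnn : ∀ k ≤ n, 0 ≤ a k) :
    a (n + 1) ≤ 1 / (2 * ((n : ℝ) + 2) * ((n : ℝ) + 3)) := by
  have hfirst : a 0 / ((n : ℝ) + 2) ≤ ∑ x ∈ antidiagonal n, a x.1 / (x.2 + 2) :=
    single_le_sum (f := fun x : ℕ × ℕ => a x.1 / ((x.2 : ℝ) + 2))
      (fun x hx => div_nonneg (hnn _ (HasAntidiagonal.antidiagonal.fst_le hx)) (by positivity))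
      (a := (0, n)) (mem_antidiagonal.2 (zero_add n))
  have hrec := h.succ n
  rw [h.zero] at hfirst
  have hmul : ((n : ℝ) + 2) * a (n + 1) ≤ ((n : ℝ) + 2) * (1 / (2 * (n + 2) * (n + 3))) := by
    have e1 : ((n : ℝ) + 2) * (1 / (2 * (n + 2) * (n + 3))) = 1 / (2 * (n + 3)) := by
      field_simp
    have e2 : 1 / ((n : ℝ) + 3) - 1 / 2 / (n + 2) ≤ 1 / (2 * (n + 3)) := by
      rw [div_div, div_sub_div _ _ (by positivity) (by positivity),
        div_le_div_iff₀ (by positivity) (by positivity)]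
      nlinarith
    linarith
  exact le_of_mul_le_mul_left hmul (by positivity)

theorem half_sub_recipConv_le (h : ConvRec a) (n : ℕ)
    (hle : ∀ k ≤ n, a (k + 1) ≤ 1 / (2 * ((k : ℝ) + 2) * ((k : ℝ) + 3))) :
    (1 / 2 - recipConv n) / 2 ≤ ((n : ℝ) + 3) * ((n : ℝ) + 4) * a (n + 2) := by
  have hterm : ∀ x ∈ antidiagonal n, a (x.1 + 1) / ((x.2 : ℝ) + 2) ≤
      1 / (2 * ((n : ℝ) + 4)) *
        (1 / (((x.1 : ℝ) + 2) * (x.1 + 3)) + 1 / (((x.1 : ℝ) + 2) * (x.2 + 2))) := by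
    intro x hx
    have hsum : (n : ℝ) = x.1 + x.2 := by exact_mod_cast (mem_antidiagonal.1 hx).symm
    -- partial fractions of `1 / ((p + 3) (q + 2))`, whose denominators add up to `n + 5`
    calc a (x.1 + 1) / ((x.2 : ℝ) + 2)
        ≤ 1 / (2 * ((x.1 : ℝ) + 2) * (x.1 + 3)) / (x.2 + 2) := by
          gcongr; exact hle x.1 (HasAntidiagonal.antidiagonal.fst_le hx)
      _ ≤ _ := by
          rw [hsum]
          field_simp
          nlinarith [Nat.cast_nonneg (α := ℝ) x.1, Nat.cast_nonneg (α := ℝ) x.2]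
  have hsum : ∑ x ∈ antidiagonal n, a (x.1 + 1) / ((x.2 : ℝ) + 2) ≤
      1 / (2 * ((n : ℝ) + 4)) * (1 / 2 - 1 / (n + 3) + recipConv n) := by
    refine (sum_le_sum hterm).trans_eq ?_
    rw [← mul_sum, sum_add_distrib,
      Nat.sum_antidiagonal_eq_sum_range_succ (fun i _ => 1 / (((i : ℝ) + 2) * (i + 3))),
      sum_range_one_div_add_two_mul_add_three, recipConv]
    push_cast
    ring_nf
  have hrec := h.succ (n + 1)
  rw [Nat.sum_antidiagonal_succ, h.zero] at hrec
  push_cast at hrec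
  have key : (1 / 2 - recipConv n) / (2 * ((n : ℝ) + 4)) ≤ ((n : ℝ) + 3) * a (n + 2) := by
    have e : 1 / ((n : ℝ) + 4) - 1 / 2 / (n + 3)
        - 1 / (2 * ((n : ℝ) + 4)) * (1 / 2 - 1 / (n + 3) + recipConv n)
        = (1 / 2 - recipConv n) / (2 * ((n : ℝ) + 4)) := by
      field_simp
      ring
    have e1 : (n : ℝ) + 1 + 3 = n + 4 := by ring
    have e2 : (n : ℝ) + 1 + 2 = n + 3 := by ring
    rw [e1, e2] at hrec
    linarith
  calc (1 / 2 - recipConv n) / 2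
      = ((n : ℝ) + 4) * ((1 / 2 - recipConv n) / (2 * ((n : ℝ) + 4))) := by field_simp
    _ ≤ ((n : ℝ) + 4) * (((n : ℝ) + 3) * a (n + 2)) := by gcongr
    _ = ((n : ℝ) + 3) * ((n : ℝ) + 4) * a (n + 2) := by ring

theorem pos (h : ConvRec a) (n : ℕ) : 0 < a n := by
  induction n using Nat.strong_induction_on with
  | _ n ih =>
    match n, ih with
    | 0, _ => rw [h.zero]; norm_num
    | 1, _ => rw [h.one]; norm_num
    | n + 2, ih =>
      have hle : ∀ k ≤ n, a (k + 1) ≤ 1 / (2 * ((k : ℝ) + 2) * ((k : ℝ) + 3)) :=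
        fun k hk => h.succ_le_of_nonneg k fun j hj => (ih j (by omega)).le
      have hlow := h.half_sub_recipConv_le n hle
      have hW := recipConv_lt_half n
      have hprod : 0 < ((n : ℝ) + 3) * ((n : ℝ) + 4) * a (n + 2) := by linarith
      exact pos_of_mul_pos_right hprod (by positivity)

theorem succ_le (h : ConvRec a) (n : ℕ) :
    a (n + 1) ≤ 1 / (2 * ((n : ℝ) + 2) * ((n : ℝ) + 3)) :=
  h.succ_le_of_nonneg n fun k _ => (h.pos k).le

theorem le_one_div_sq (h : ConvRec a) : ∀ n : ℕ, a n ≤ 1 / (2 * ((n : ℝ) + 1) ^ 2)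
  | 0 => by rw [h.zero]; norm_num
  | n + 1 => (h.succ_le n).trans <| by
      push_cast
      exact one_div_le_one_div_of_le (by positivity) (by nlinarith)

theorem sum_div_mul_le (h : ConvRec a) (n : ℕ) :
    ∑ x ∈ antidiagonal n, a x.1 / (((x.2 : ℝ) + 2) * (x.2 + 3))
      ≤ 4 / ((n : ℝ) + 2) ^ 2 := by
  have hterm : ∀ x ∈ antidiagonal n, a x.1 / (((x.2 : ℝ) + 2) * (x.2 + 3)) ≤
      1 / ((n : ℝ) + 2) ^ 2 * (1 / ((x.1 : ℝ) + 1) ^ 2 + 1 / ((x.2 : ℝ) + 1) ^ 2) := by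
    intro x hx
    have hsum : (n : ℝ) = x.1 + x.2 := by exact_mod_cast (mem_antidiagonal.1 hx).symm
    -- `1 / (u v) = (1 / u + 1 / v) / (u + v)` with `u + v = n + 2`; `(s + t)² ≤ 2 (s² + t²)`
    calc a x.1 / (((x.2 : ℝ) + 2) * (x.2 + 3))
        ≤ 1 / (2 * ((x.1 : ℝ) + 1) ^ 2) / ((x.2 : ℝ) + 1) ^ 2 :=
          div_le_div₀ (by positivity) (h.le_one_div_sq x.1) (by positivity) (by nlinarith)
      _ ≤ _ := by
          rw [hsum]
          field_simp
          nlinarith [sq_nonneg ((x.1 : ℝ) - x.2)]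
  calc ∑ x ∈ antidiagonal n, a x.1 / (((x.2 : ℝ) + 2) * (x.2 + 3))
      ≤ 1 / ((n : ℝ) + 2) ^ 2 * (2 * ∑ k ∈ range (n + 1), 1 / ((k : ℝ) + 1) ^ 2) := by
        rw [← Nat.sum_antidiagonal_add_swap (fun k => 1 / ((k : ℝ) + 1) ^ 2), mul_sum]
        exact sum_le_sum hterm
    _ ≤ 1 / ((n : ℝ) + 2) ^ 2 * (2 * 2) := by
        gcongr; exact sum_range_inv_add_one_sq_le_two _
    _ = 4 / ((n : ℝ) + 2) ^ 2 := by ring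

theorem mul_sub_mul_eq (h : ConvRec a) (n : ℕ) :
    ((n : ℝ) + 3) * a (n + 2) - ((n : ℝ) + 2) * a (n + 1) =
      ∑ x ∈ antidiagonal n, a x.1 / (((x.2 : ℝ) + 2) * (x.2 + 3))
        - a (n + 1) / 2 - 1 / (((n : ℝ) + 3) * (n + 4)) := by
  have h1 := h.succ n
  have h2 := h.succ (n + 1)
  rw [Nat.sum_antidiagonal_succ'] at h2
  have hdiff : ∑ x ∈ antidiagonal n, a x.1 / (((x.2 : ℝ) + 2) * (x.2 + 3)) =
      ∑ x ∈ antidiagonal n, a x.1 / ((x.2 : ℝ) + 2)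
        - ∑ x ∈ antidiagonal n, a x.1 / (((x.2 + 1 : ℕ) : ℝ) + 2) := by
    rw [← sum_sub_distrib]
    refine sum_congr rfl fun x _ => ?_
    push_cast
    field_simp
    ring
  have hend : 1 / (((n : ℝ) + 3) * (n + 4)) = 1 / ((n : ℝ) + 3) - 1 / ((n + 1 : ℕ) + 3) := by
    push_cast
    field_simp
    ring
  rw [hdiff, hend]
  push_cast at h2 ⊢
  linarith

theorem abs_mul_sub_le (h : ConvRec a) (n : ℕ) :
    |((n : ℝ) + 4) * (a (n + 3) - a (n + 2))| ≤ 6 / ((n : ℝ) + 3) ^ 2 := by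
  set T := ∑ x ∈ antidiagonal (n + 1), a x.1 / (((x.2 : ℝ) + 2) * (x.2 + 3))
  have hT0 : 0 ≤ T := sum_nonneg fun x _ => div_nonneg (h.pos x.1).le (by positivity)
  have hT : T ≤ 4 / ((n : ℝ) + 3) ^ 2 := by
    convert h.sum_div_mul_le (n + 1) using 3; push_cast; ring
  have hstep : ((n : ℝ) + 4) * (a (n + 3) - a (n + 2))
      = T - 3 / 2 * a (n + 2) - 1 / (((n : ℝ) + 4) * (n + 5)) := by
    have h' := h.mul_sub_mul_eq (n + 1)
    push_cast at h'
    linear_combination h'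
  have hpos := h.pos (n + 2)
  have hup : a (n + 2) ≤ 1 / ((n : ℝ) + 3) ^ 2 := (h.succ_le (n + 1)).trans <|
    one_div_le_one_div_of_le (by positivity) (by push_cast; nlinarith)
  have hend : 1 / (((n : ℝ) + 4) * (n + 5)) ≤ 1 / ((n : ℝ) + 3) ^ 2 :=
    one_div_le_one_div_of_le (by positivity) (by nlinarith)
  have hq : 0 ≤ 1 / ((n : ℝ) + 3) ^ 2 := by positivity
  have hq' : 0 ≤ 1 / (((n : ℝ) + 4) * (n + 5)) := by positivity
  have e4 : 4 / ((n : ℝ) + 3) ^ 2 = 4 * (1 / ((n : ℝ) + 3) ^ 2) := by ring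
  have e6 : 6 / ((n : ℝ) + 3) ^ 2 = 6 * (1 / ((n : ℝ) + 3) ^ 2) := by ring
  rw [hstep, abs_le]
  constructor <;> linarith

theorem abs_ratio_sub_one_le (h : ConvRec a) (n : ℕ) (hW : recipConv n ≤ 1 / 4) :
    |a (n + 3) / a (n + 2) - 1| ≤ 48 / ((n : ℝ) + 3) := by
  have hpos := h.pos (n + 2)
  have hlow : 1 / 8 ≤ ((n : ℝ) + 3) * ((n : ℝ) + 4) * a (n + 2) :=
    le_trans (by linarith) (h.half_sub_recipConv_le n fun k _ => h.succ_le k)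
  have hratio : a (n + 3) / a (n + 2) - 1
      = ((n : ℝ) + 3) * (((n : ℝ) + 4) * (a (n + 3) - a (n + 2)))
        / (((n : ℝ) + 3) * ((n : ℝ) + 4) * a (n + 2)) := by
    field_simp
  rw [hratio, abs_div, abs_mul, abs_of_pos (by positivity : (0 : ℝ) < n + 3),
    abs_of_pos (by positivity : (0 : ℝ) < ((n : ℝ) + 3) * ((n : ℝ) + 4) * a (n + 2))]
  calc ((n : ℝ) + 3) * |((n : ℝ) + 4) * (a (n + 3) - a (n + 2))|
        / (((n : ℝ) + 3) * ((n : ℝ) + 4) * a (n + 2))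
      ≤ ((n : ℝ) + 3) * (6 / ((n : ℝ) + 3) ^ 2) / (1 / 8) := by
        gcongr; exact h.abs_mul_sub_le n
    _ = 48 / ((n : ℝ) + 3) := by field_simp; ring

theorem tendsto_ratio (h : ConvRec a) : Tendsto (fun n => a (n + 1) / a n) atTop (𝓝 1) := by
  rw [← tendsto_add_atTop_iff_nat 2, ← tendsto_sub_nhds_zero_iff]
  have hW : ∀ᶠ n in atTop, recipConv n ≤ 1 / 4 :=
    ((tendsto_order.1 tendsto_recipConv).2 _ (by norm_num)).mono fun _ => le_of_lt
  have hbound : Tendsto (fun n : ℕ => 48 / ((n : ℝ) + 3)) atTop (𝓝 0) :=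
    tendsto_const_nhds.div_atTop (tendsto_natCast_atTop_atTop.atTop_add tendsto_const_nhds)
  refine squeeze_zero_norm' (hW.mono fun n hn => ?_) hbound
  simpa using h.abs_ratio_sub_one_le n hn

end ConvRec

/-- The sequence of ratios `b (n+1) / b n` converges to `1` as `n → ∞`. -/
theorem b_ratio_tendsto_one (b : ℕ → ℝ) (hb1 : b 1 = 1 / 2)
    (hb : ∀ n : ℕ, 2 ≤ n →
      b n = (1 / (n : ℝ)) * (1 / ((n : ℝ) + 1) -
        ∑ k ∈ Finset.range (n - 1), b (n - k - 1) / ((k : ℝ) + 2))) :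
    Filter.Tendsto (fun n : ℕ => b (n + 1) / b n) Filter.atTop (nhds 1) :=
  (tendsto_add_atTop_iff_nat 1).1 (convRec_of_recurrence hb1 hb).tendsto_ratio
end

section
/- For every real x > 0, (1 + 1/x)^x = e·(1 − Σ_{n=1}^∞ b_n/(x+1)^n), i.e. the series Σ_{n=1}^∞ b_n/(x+1)^n converges and equals 1 − (1/e)·(1 + 1/x)^x. -/
/-!
With `G s = ∑ b (n + 1) s ^ (n + 1)` and `W s = ∑ s ^ n / (n + 2)`, the recurrence (together
with `b 1 = 1 / 2`) says exactly that the coefficients of `G' + G W` and `W` agree, i.e.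
`G' = (1 - G) W`; an induction gives `|b n| ≤ 1`, so all series converge on `|s| < 1`.
Let `V s = ∑ s ^ (n + 1) / ((n + 1) (n + 2))`, so that `V' = W` and `V 0 = 0`; then
`(1 - G) exp V` has zero derivative, whence `1 - G = exp (-V)`. Finally
`s V s = s + (1 - s) log (1 - s)` by splitting `1 / ((n + 1) (n + 2))` into partial fractions,
and at `s = 1 / (x + 1)` this is `V = 1 - x log (1 + 1 / x)`.
-/

open Finset Real

theorem summable_norm_mul_pow_of_norm_le {R : Type*} [NormedRing R] [NormOneClass R]
    {c : ℕ → R} {C : ℝ} (hc : ∀ n, ‖c n‖ ≤ C) {s : R} (hs : ‖s‖ < 1) :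
    Summable fun n ↦ ‖c n * s ^ n‖ := by
  refine .of_nonneg_of_le (fun n ↦ norm_nonneg _) (fun n ↦ ?_)
    ((summable_geometric_of_lt_one (norm_nonneg s) hs).mul_left C)
  calc ‖c n * s ^ n‖ ≤ ‖c n‖ * ‖s‖ ^ n :=
        (norm_mul_le _ _).trans (by gcongr; exact norm_pow_le s n)
    _ ≤ C * ‖s‖ ^ n := by gcongr; exact hc n

theorem summable_norm_mul_pow_succ_of_norm_le {R : Type*} [NormedRing R] [NormOneClass R]
    {c : ℕ → R} {C : ℝ} (hc : ∀ n, ‖c n‖ ≤ C) {s : R} (hs : ‖s‖ < 1) :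
    Summable fun n ↦ ‖c n * s ^ (n + 1)‖ :=
  .of_nonneg_of_le (fun n ↦ norm_nonneg _)
    (fun n ↦ by rw [pow_succ, ← mul_assoc]; exact norm_mul_le _ _)
    ((summable_norm_mul_pow_of_norm_le hc hs).mul_right ‖s‖)

theorem hasDerivAt_tsum_mul_pow_succ {𝕜 : Type*} [RCLike 𝕜] {c : ℕ → 𝕜} {C : ℝ}
    (hc : ∀ n, ‖c n‖ ≤ C) {s : 𝕜} (hs : ‖s‖ < 1) :
    HasDerivAt (fun y ↦ ∑' n, c n * y ^ (n + 1)) (∑' n, (n + 1) * c n * s ^ n) s := by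
  obtain ⟨r, hsr, hr1⟩ := exists_between hs
  have hr0 : 0 < r := (norm_nonneg s).trans_lt hsr
  have hu : Summable fun n : ℕ ↦ C * ((n + 1) * r ^ n) := by
    have h := summable_choose_mul_geometric_of_norm_lt_one 1 (r := r)
      (by rwa [Real.norm_of_nonneg hr0.le])
    simpa using h.mul_left C
  refine hasDerivAt_tsum_of_isPreconnected (g := fun n y ↦ c n * y ^ (n + 1))
    (g' := fun n y ↦ (n + 1) * c n * y ^ n) hu Metric.isOpen_ball
    (convex_ball 0 r).isPreconnected (fun n y _ ↦ ?_) (fun n y hy ↦ ?_)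
    (Metric.mem_ball_self hr0) ?_ (mem_ball_zero_iff.2 hsr)
  · simpa [mul_comm, mul_assoc, mul_left_comm] using (hasDerivAt_pow (n + 1) y).const_mul (c n)
  · rw [mem_ball_zero_iff] at hy
    have hn : ‖(n + 1 : 𝕜)‖ = n + 1 := by
      exact_mod_cast RCLike.norm_natCast (K := 𝕜) (n + 1)
    rw [norm_mul, norm_mul, norm_pow, hn]
    calc (n + 1) * ‖c n‖ * ‖y‖ ^ n ≤ (n + 1) * C * r ^ n :=
          mul_le_mul (by gcongr; exact hc n) (pow_le_pow_left₀ (norm_nonneg y) hy.le n)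
            (by positivity) (by have := (norm_nonneg _).trans (hc 0); positivity)
      _ = C * ((n + 1) * r ^ n) := by ring
  · simp

theorem hasDerivAt_tsum_pow_succ_div_mul {s : ℝ} (hs : |s| < 1) :
    HasDerivAt (fun y : ℝ ↦ ∑' n : ℕ, y ^ (n + 1) / ((n + 1) * (n + 2)))
      (∑' n : ℕ, s ^ n / (n + 2)) s := by
  have hc : ∀ n : ℕ, ‖((n + 1 : ℝ) * (n + 2))⁻¹‖ ≤ 1 := fun n ↦ by
    rw [norm_inv, Real.norm_of_nonneg (by positivity)]
    exact inv_le_one_of_one_le₀ (by nlinarith [n.cast_nonneg (α := ℝ)])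
  have h := hasDerivAt_tsum_mul_pow_succ (c := fun n : ℕ ↦ ((n + 1 : ℝ) * (n + 2))⁻¹) hc hs
  simp only [← div_eq_inv_mul] at h
  refine h.congr_deriv (tsum_congr fun n ↦ ?_)
  field_simp

theorem abs_inv_add_one_lt_one {x : ℝ} (hx : 0 < x) : |(x + 1)⁻¹| < 1 := by
  rw [abs_of_pos (by positivity)]
  exact inv_lt_one_of_one_lt₀ (by linarith)

theorem hasSum_pow_add_two_div_mul {t : ℝ} (ht : |t| < 1) :
    HasSum (fun n : ℕ ↦ t ^ (n + 2) / ((n + 1) * (n + 2))) (t + (1 - t) * log (1 - t)) := by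
  have hlog := hasSum_pow_div_log_of_abs_lt_one ht
  have hshift := (hasSum_nat_add_iff' 1).2 hlog
  simp only [sum_range_one, Nat.cast_zero, zero_add, pow_one, div_one] at hshift
  rw [show t + (1 - t) * log (1 - t) = t * -log (1 - t) - (-log (1 - t) - t) by ring]
  refine ((hlog.mul_left t).sub hshift).congr_fun fun n ↦ ?_
  push_cast
  field_simp
  ring

theorem sum_antidiagonal_div_eq_of_recurrence {b : ℕ → ℝ}
    (hb : ∀ n : ℕ, 2 ≤ n →
      b n = (1 / (n : ℝ)) * (1 / ((n : ℝ) + 1) -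
        ∑ k ∈ Finset.range (n - 1), b (n - k - 1) / ((k : ℝ) + 2))) (n : ℕ) :
    ∑ p ∈ antidiagonal n, b (p.2 + 1) / (p.1 + 2) = 1 / (n + 3) - (n + 2) * b (n + 2) := by
  have h := hb (n + 2) (by omega)
  rw [Nat.sum_antidiagonal_eq_sum_range_succ (fun i j ↦ b (j + 1) / (i + 2))]
  have hsum : ∑ k ∈ range (n + 2 - 1), b (n + 2 - k - 1) / ((k : ℝ) + 2)
      = ∑ k ∈ range (n + 1), b (n - k + 1) / ((k : ℝ) + 2) :=
    sum_congr rfl fun k hk ↦ by rw [show n + 2 - k - 1 = n - k + 1 by grind]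
  rw [hsum] at h
  push_cast at h
  field_simp at h ⊢
  linear_combination h

theorem abs_le_one_of_sum_antidiagonal_div_eq {b : ℕ → ℝ} (hb1 : b 1 = 1 / 2)
    (hrec : ∀ n : ℕ,
      ∑ p ∈ antidiagonal n, b (p.2 + 1) / (p.1 + 2) = 1 / (n + 3) - (n + 2) * b (n + 2))
    (n : ℕ) : |b (n + 1)| ≤ 1 := by
  induction n using Nat.strong_induction_on with
  | _ n ih =>
  rcases n with _ | n
  · rw [hb1]; norm_num
  have hterm : ∀ p ∈ antidiagonal n, |b (p.2 + 1) / (p.1 + 2)| ≤ 1 / 2 := by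
    intro p hp
    have hp2 : p.2 < n + 1 := by have := mem_antidiagonal.1 hp; omega
    rw [abs_div, abs_of_pos (by positivity : (0 : ℝ) < p.1 + 2), div_le_iff₀ (by positivity)]
    linarith [ih p.2 hp2, (p.1.cast_nonneg : (0 : ℝ) ≤ p.1)]
  have hsum : |∑ p ∈ antidiagonal n, b (p.2 + 1) / (p.1 + 2)| ≤ (n + 1) / 2 :=
    calc _ ≤ ∑ p ∈ antidiagonal n, |b (p.2 + 1) / (p.1 + 2)| := abs_sum_le_sum_abs _ _
      _ ≤ ∑ p ∈ antidiagonal n, (1 / 2 : ℝ) := sum_le_sum hterm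
      _ = (n + 1) / 2 := by rw [sum_const, Nat.card_antidiagonal, nsmul_eq_mul]; push_cast; ring
  have hmul : (n + 2) * |b (n + 2)| ≤ n + 2 := by
    have h3 : 1 / ((n : ℝ) + 3) ≤ 1 / 3 := by gcongr; linarith [n.cast_nonneg (α := ℝ)]
    have h3pos : 0 ≤ 1 / ((n : ℝ) + 3) := by positivity
    rw [hrec n, abs_sub_comm, abs_sub_le_iff] at hsum
    have h : |(n + 2) * b (n + 2)| ≤ n + 2 := abs_le.2 ⟨by linarith, by linarith⟩
    rwa [abs_mul, abs_of_pos (by positivity : (0 : ℝ) < n + 2)] at h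
  exact le_of_mul_le_mul_left (by linarith) (by positivity : (0 : ℝ) < n + 2)

theorem hasSum_succ_mul_pow_eq_one_sub_mul {b : ℕ → ℝ} (hb1 : b 1 = 1 / 2)
    (hrec : ∀ n : ℕ,
      ∑ p ∈ antidiagonal n, b (p.2 + 1) / (p.1 + 2) = 1 / (n + 3) - (n + 2) * b (n + 2))
    (hbound : ∀ n, |b (n + 1)| ≤ 1) {s : ℝ} (hs : |s| < 1) :
    HasSum (fun n ↦ (n + 1) * b (n + 1) * s ^ n)
      ((1 - ∑' n, b (n + 1) * s ^ (n + 1)) * ∑' n : ℕ, s ^ n / (n + 2)) := by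
  set G := ∑' n, b (n + 1) * s ^ (n + 1)
  set W := ∑' n : ℕ, s ^ n / (n + 2)
  have hW : Summable fun n : ℕ ↦ ‖s ^ n / (n + 2)‖ := by
    refine (summable_norm_mul_pow_of_norm_le (c := fun n : ℕ ↦ ((n : ℝ) + 2)⁻¹) (C := 1)
      (fun n ↦ ?_) hs).congr fun n ↦ by rw [div_eq_inv_mul]
    rw [norm_inv, Real.norm_of_nonneg (by positivity)]
    exact inv_le_one_of_one_le₀ (by linarith [n.cast_nonneg (α := ℝ)])
  have hG := summable_norm_mul_pow_succ_of_norm_le (c := fun n ↦ b (n + 1)) hbound hs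
  have hprod : HasSum (fun n ↦ s ^ (n + 1) * (1 / (n + 3) - (n + 2) * b (n + 2))) (W * G) := by
    have h := (summable_norm_sum_mul_antidiagonal_of_summable_norm hW hG).of_norm.hasSum
    rw [← tsum_mul_tsum_eq_tsum_sum_antidiagonal_of_summable_norm hW hG] at h
    refine h.congr_fun fun n ↦ ?_
    rw [← hrec n, mul_sum]
    refine sum_congr rfl fun p hp ↦ ?_
    rw [← mem_antidiagonal.1 hp]
    ring
  have hWshift : HasSum (fun n : ℕ ↦ s ^ (n + 1) / (n + 3)) (W - 1 / 2) := by
    have h := (hasSum_nat_add_iff' 1).2 hW.of_norm.hasSum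
    rw [sum_range_one, Nat.cast_zero, pow_zero, zero_add] at h
    exact h.congr_fun fun n ↦ by push_cast; ring
  rw [← hasSum_nat_add_iff' 1, sum_range_one, Nat.cast_zero, zero_add, hb1,
    show (1 - G) * W - 1 * (1 / 2) * s ^ 0 = W - 1 / 2 - W * G by ring]
  exact (hWshift.sub hprod).congr_fun fun n ↦ by push_cast; ring

theorem hasSum_mul_pow_succ_eq_one_sub_exp {b : ℕ → ℝ} (hb1 : b 1 = 1 / 2)
    (hrec : ∀ n : ℕ,
      ∑ p ∈ antidiagonal n, b (p.2 + 1) / (p.1 + 2) = 1 / (n + 3) - (n + 2) * b (n + 2))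
    (hbound : ∀ n, |b (n + 1)| ≤ 1) {s : ℝ} (hs : |s| < 1) :
    HasSum (fun n ↦ b (n + 1) * s ^ (n + 1))
      (1 - exp (-∑' n : ℕ, s ^ (n + 1) / ((n + 1) * (n + 2)))) := by
  set G : ℝ → ℝ := fun y ↦ ∑' n, b (n + 1) * y ^ (n + 1)
  set V : ℝ → ℝ := fun y ↦ ∑' n : ℕ, y ^ (n + 1) / ((n + 1) * (n + 2))
  have hG : ∀ y ∈ Metric.ball (0 : ℝ) 1,
      HasDerivAt G (∑' n, (n + 1) * b (n + 1) * y ^ n) y := fun y hy ↦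
    hasDerivAt_tsum_mul_pow_succ (c := fun n ↦ b (n + 1)) hbound (mem_ball_zero_iff.1 hy)
  have hV : ∀ y ∈ Metric.ball (0 : ℝ) 1, HasDerivAt V (∑' n : ℕ, y ^ n / (n + 2)) y :=
    fun y hy ↦ hasDerivAt_tsum_pow_succ_div_mul (mem_ball_zero_iff.1 hy)
  set φ : ℝ → ℝ := fun y ↦ (1 - G y) * exp (V y)
  have hφ : ∀ y ∈ Metric.ball (0 : ℝ) 1, HasDerivAt φ 0 y := by
    intro y hy
    have hode :=
      (hasSum_succ_mul_pow_eq_one_sub_mul hb1 hrec hbound (mem_ball_zero_iff.1 hy)).tsum_eq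
    exact (((hG y hy).const_sub 1).mul (hV y hy).exp).congr_deriv (by rw [hode]; ring)
  have hconst : φ 0 = φ s :=
    Metric.isOpen_ball.is_const_of_deriv_eq_zero (convex_ball 0 1).isPreconnected
      (fun y hy ↦ (hφ y hy).differentiableAt.differentiableWithinAt)
      (fun y hy ↦ (hφ y hy).deriv) (Metric.mem_ball_self one_pos) (mem_ball_zero_iff.2 hs)
  have hφ0 : φ 0 = 1 := by simp [φ, G, V]
  have hGs : HasSum (fun n ↦ b (n + 1) * s ^ (n + 1)) (G s) :=
    (summable_norm_mul_pow_succ_of_norm_le (c := fun n ↦ b (n + 1)) hbound hs).of_norm.hasSum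
  have hval : 1 - exp (-V s) = G s := by
    have h : (1 - G s) * exp (V s) = 1 := hconst.symm.trans hφ0
    rw [exp_neg, ← eq_inv_of_mul_eq_one_left h]
    ring
  exact hval ▸ hGs

theorem exp_neg_tsum_inv_add_one_pow {x : ℝ} (hx : 0 < x) :
    exp (-∑' n : ℕ, (x + 1)⁻¹ ^ (n + 1) / ((n + 1) * (n + 2))) =
      1 / exp 1 * (1 + 1 / x) ^ x := by
  set t := (x + 1)⁻¹ with ht
  have hV : t * ∑' n : ℕ, t ^ (n + 1) / ((n + 1) * (n + 2)) = t + (1 - t) * log (1 - t) := by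
    rw [← tsum_mul_left, ← (hasSum_pow_add_two_div_mul (abs_inv_add_one_lt_one hx)).tsum_eq]
    exact tsum_congr fun n ↦ by ring
  have h1t : 1 - t = (1 + 1 / x)⁻¹ := by rw [ht]; field_simp; ring
  rw [h1t, log_inv] at hV
  have hV' : ∑' n : ℕ, t ^ (n + 1) / ((n + 1) * (n + 2)) = 1 - x * log (1 + 1 / x) := by
    rw [ht] at hV ⊢
    field_simp at hV ⊢
    linear_combination hV
  rw [hV', rpow_def_of_pos (by positivity), div_mul_eq_mul_div, one_mul, ← exp_sub]
  ring_nf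

/-- For every real `x > 0`, the series `Σ_{n=1}^∞ b n/(x+1)^n` converges and equals
`1 − (1/e)·(1 + 1/x)^x`, i.e. `(1 + 1/x)^x = e·(1 − Σ_{n=1}^∞ b n/(x+1)^n)`. -/
theorem hasSum_b_div_pow (b : ℕ → ℝ) (hb1 : b 1 = 1 / 2)
    (hb : ∀ n : ℕ, 2 ≤ n →
      b n = (1 / (n : ℝ)) * (1 / ((n : ℝ) + 1) -
        ∑ k ∈ Finset.range (n - 1), b (n - k - 1) / ((k : ℝ) + 2)))
    (x : ℝ) (hx : 0 < x) :
    HasSum (fun n : ℕ => b (n + 1) / (x + 1) ^ (n + 1))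
      (1 - (1 / Real.exp 1) * (1 + 1 / x) ^ x) := by
  have hrec := sum_antidiagonal_div_eq_of_recurrence hb
  have h := hasSum_mul_pow_succ_eq_one_sub_exp hb1 hrec
    (abs_le_one_of_sum_antidiagonal_div_eq hb1 hrec) (abs_inv_add_one_lt_one hx)
  rw [exp_neg_tsum_inv_add_one_pow hx] at h
  exact h.congr_fun fun n ↦ by rw [inv_pow, div_eq_mul_inv]
end

section
/- The series Σ_{n=1}^∞ b_n converges and Σ_{n=1}^∞ b_n = 1 − 1/e. -/
/-!
Put `β = 1 - ∑_{n ≥ 1} bₙ Xⁿ`. The recurrence says exactly that `β' = -β V'` for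
`V = ∑_{m ≥ 1} Xᵐ / (m (m + 1))`, so `β = exp (-V) = ∑ₖ (-1)ᵏ Vᵏ / k!` as formal power series.
The coefficients of `V` are nonnegative and sum to `1`, so the double series
`∑ₖ ∑ₙ (-1)ᵏ / k! · [Xⁿ] Vᵏ` converges absolutely; summing it over `n` first gives `∑ₙ βₙ`,
summing over `k` first gives `∑ₖ (-1)ᵏ / k! = e⁻¹`.
-/

open Finset

namespace PowerSeries

theorem derivative_rescale {R : Type*} [CommSemiring R] (a : R) (f : R⟦X⟧) :
    d⁄dX R (rescale a f) = a • rescale a (d⁄dX R f) := by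
  ext n
  simp only [coeff_derivative, coeff_rescale, coeff_smul, smul_eq_mul]
  ring

theorem eq_of_derivative_eq_mul {K : Type*} [Field K] [CharZero K] {F G W : K⟦X⟧}
    (hF : d⁄dX K F = F * W) (hG : d⁄dX K G = G * W) (hG0 : constantCoeff G ≠ 0)
    (h0 : constantCoeff F = constantCoeff G) : F = G := by
  have hGG : G⁻¹ * G = 1 := PowerSeries.inv_mul_cancel G hG0
  have hD : d⁄dX K (F * G⁻¹) = d⁄dX K 1 := by
    rw [Derivation.leibniz, derivative_inv', hF, hG, derivative_one, smul_eq_mul, smul_eq_mul]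
    linear_combination (-(F * W * G⁻¹)) * hGG
  have hFG : F * G⁻¹ = 1 := derivative.ext hD (by simp [h0, hG0])
  calc F = F * G⁻¹ * G := by rw [mul_assoc, hGG, mul_one]
    _ = G := by rw [hFG, one_mul]

section NonnegCoeff

variable {f g : ℝ⟦X⟧} {a b : ℝ}

theorem hasSum_coeff_mul (hf0 : ∀ n, 0 ≤ coeff n f) (hg0 : ∀ n, 0 ≤ coeff n g)
    (hf : HasSum (fun n ↦ coeff n f) a) (hg : HasSum (fun n ↦ coeff n g) b) :
    HasSum (fun n ↦ coeff n (f * g)) (a * b) := by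
  have hfg : Summable fun x : ℕ × ℕ ↦ coeff x.1 f * coeff x.2 g :=
    hf.summable.mul_of_nonneg hg.summable hf0 hg0
  have hcauchy := hf.summable.tsum_mul_tsum_eq_tsum_sum_antidiagonal
    (f := fun n ↦ coeff n f) (g := fun n ↦ coeff n g) hg.summable hfg
  rw [hf.tsum_eq, hg.tsum_eq] at hcauchy
  simp only [coeff_mul, hcauchy]
  exact (summable_sum_mul_antidiagonal_of_summable_mul
    (f := fun n ↦ coeff n f) (g := fun n ↦ coeff n g) hfg).hasSum

theorem coeff_pow_nonneg (hg0 : ∀ n, 0 ≤ coeff n g) (k n : ℕ) : 0 ≤ coeff n (g ^ k) := by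
  induction k generalizing n with
  | zero => rw [pow_zero, coeff_one]; split_ifs <;> norm_num
  | succ k ih =>
    rw [pow_succ, coeff_mul]
    exact sum_nonneg fun _ _ ↦ mul_nonneg (ih _) (hg0 _)

theorem hasSum_coeff_pow (hg0 : ∀ n, 0 ≤ coeff n g) (hg : HasSum (fun n ↦ coeff n g) b)
    (k : ℕ) : HasSum (fun n ↦ coeff n (g ^ k)) (b ^ k) := by
  induction k with
  | zero => simpa [coeff_one] using hasSum_ite_eq 0 (1 : ℝ)
  | succ k ih =>
    rw [pow_succ, pow_succ]
    exact hasSum_coeff_mul (coeff_pow_nonneg hg0 k) hg0 ih hg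

/-- No Abel-type boundary argument is needed: nonnegativity of the coefficients of `g` makes the
double series `∑ₖ ∑ₙ fₖ [Xⁿ] gᵏ` absolutely convergent, so it may be summed in either order. -/
theorem hasSum_coeff_subst (hg00 : constantCoeff g = 0) (hg0 : ∀ n, 0 ≤ coeff n g)
    (hg : HasSum (fun n ↦ coeff n g) b) (hf : Summable fun d ↦ |coeff d f| * b ^ d) :
    HasSum (fun n ↦ coeff n (f.subst g)) (∑' d, coeff d f * b ^ d) := by
  have hsubst : HasSubst g := HasSubst.of_constantCoeff_zero' hg00
  let T : ℕ × ℕ → ℝ := fun p ↦ coeff p.1 f * coeff p.2 (g ^ p.1)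
  have hrow (d : ℕ) : HasSum (fun n ↦ T (d, n)) (coeff d f * b ^ d) :=
    (hasSum_coeff_pow hg0 hg d).mul_left _
  have hrow_norm (d : ℕ) : HasSum (fun n ↦ ‖T (d, n)‖) (|coeff d f| * b ^ d) := by
    simpa [T, abs_mul, abs_of_nonneg (coeff_pow_nonneg hg0 _ _)]
      using (hasSum_coeff_pow hg0 hg d).mul_left |coeff d f|
  have hsum : Summable T := Summable.of_norm <|
    (summable_prod_of_nonneg fun _ ↦ norm_nonneg _).2
      ⟨fun d ↦ (hrow_norm d).summable, hf.congr fun d ↦ (hrow_norm d).tsum_eq.symm⟩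
  have hT : HasSum T (∑' d, coeff d f * b ^ d) := by
    rw [← tsum_congr fun d ↦ (hrow d).tsum_eq, ← hsum.tsum_prod' fun d ↦ (hrow d).summable]
    exact hsum.hasSum
  refine ((Equiv.prodComm ℕ ℕ).hasSum_iff.mpr hT).prod_fiberwise fun n ↦ ?_
  have hfin := coeff_subst_finite' hsubst f n
  rw [coeff_subst' hsubst, ← tsum_eq_finsum (L := .unconditional ℕ) hfin]
  exact (summable_of_hasFiniteSupport hfin).hasSum

end NonnegCoeff

end PowerSeries

open PowerSeries

/-- `∑_{m ≥ 1} Xᵐ / (m (m + 1))`; the constant coefficient is the junk value `1 / 0 = 0`. -/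
noncomputable def telescopingSeries : ℝ⟦X⟧ := mk fun m ↦ 1 / (m * (m + 1))

theorem coeff_telescopingSeries_nonneg (n : ℕ) : 0 ≤ coeff n telescopingSeries := by
  rw [telescopingSeries, coeff_mk]
  positivity

theorem constantCoeff_telescopingSeries : constantCoeff telescopingSeries = 0 := by
  simp [← coeff_zero_eq_constantCoeff_apply, telescopingSeries]

theorem hasSubst_telescopingSeries : HasSubst telescopingSeries :=
  HasSubst.of_constantCoeff_zero' constantCoeff_telescopingSeries

theorem sum_range_coeff_telescopingSeries (n : ℕ) :
    ∑ m ∈ range (n + 1), coeff m telescopingSeries = 1 - 1 / (n + 1) := by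
  induction n with
  | zero => simp [telescopingSeries]
  | succ n ih =>
    rw [sum_range_succ, ih, telescopingSeries, coeff_mk]
    push_cast
    field_simp
    ring

theorem hasSum_coeff_telescopingSeries : HasSum (fun n ↦ coeff n telescopingSeries) 1 := by
  rw [hasSum_iff_tendsto_nat_of_nonneg coeff_telescopingSeries_nonneg,
    ← Filter.tendsto_add_atTop_iff_nat 1]
  simp only [sum_range_coeff_telescopingSeries]
  simpa using (tendsto_one_div_add_atTop_nhds_zero_nat (𝕜 := ℝ)).const_sub 1

theorem derivative_telescopingSeries :
    d⁄dX ℝ telescopingSeries = mk fun j ↦ 1 / ((j : ℝ) + 2) := by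
  ext j
  rw [coeff_derivative, telescopingSeries, coeff_mk, coeff_mk]
  push_cast
  field_simp
  ring

/-- `exp (-telescopingSeries)`. -/
noncomputable def expNegTelescopingSeries : ℝ⟦X⟧ :=
  (rescale (-1) (exp ℝ)).subst telescopingSeries

theorem derivative_expNegTelescopingSeries :
    d⁄dX ℝ expNegTelescopingSeries = expNegTelescopingSeries * -d⁄dX ℝ telescopingSeries := by
  rw [expNegTelescopingSeries, derivative_subst hasSubst_telescopingSeries, derivative_rescale,
    derivative_exp, subst_smul hasSubst_telescopingSeries]
  simp

theorem constantCoeff_expNegTelescopingSeries : constantCoeff expNegTelescopingSeries = 1 := by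
  rw [← coeff_zero_eq_constantCoeff_apply, expNegTelescopingSeries,
    coeff_subst' hasSubst_telescopingSeries, finsum_eq_single _ 0]
  · simp
  · intro d hd
    simp [coeff_zero_eq_constantCoeff_apply, constantCoeff_telescopingSeries, hd]

theorem hasSum_coeff_expNegTelescopingSeries :
    HasSum (fun n ↦ coeff n expNegTelescopingSeries) (Real.exp (-1)) := by
  have hcoeff (d : ℕ) : coeff d (rescale (-1 : ℝ) (exp ℝ)) = (-1) ^ d / d.factorial := by
    simp [div_eq_mul_inv]
  have hexp : HasSum (fun d : ℕ ↦ (-1 : ℝ) ^ d / d.factorial) (Real.exp (-1)) :=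
    Real.exp_eq_exp_ℝ ▸ NormedSpace.expSeries_div_hasSum_exp (-1 : ℝ)
  have hsubst := hasSum_coeff_subst (f := rescale (-1 : ℝ) (exp ℝ))
    constantCoeff_telescopingSeries coeff_telescopingSeries_nonneg
    hasSum_coeff_telescopingSeries
    (by simpa [hcoeff, abs_div] using Real.summable_pow_div_factorial 1)
  simpa [expNegTelescopingSeries, hcoeff, hexp.tsum_eq] using hsubst

noncomputable def oneSubGeneratingSeries (b : ℕ → ℝ) : ℝ⟦X⟧ :=
  mk fun n ↦ if n = 0 then 1 else -b n

theorem succ_mul_eq_of_recurrence (b : ℕ → ℝ) (hb1 : b 1 = 1 / 2)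
    (hb : ∀ n : ℕ, 2 ≤ n →
      b n = (1 / (n : ℝ)) * (1 / ((n : ℝ) + 1) -
        ∑ k ∈ Finset.range (n - 1), b (n - k - 1) / ((k : ℝ) + 2))) (n : ℕ) :
    (n + 1 : ℝ) * b (n + 1) = 1 / (n + 2) - ∑ k ∈ range n, b (n - k) / (k + 2) := by
  rcases n with _ | m
  · norm_num [hb1]
  · rw [hb (m + 2) (by omega)]
    have hsub : ∀ k ∈ range (m + 1), b (m + 2 - k - 1) = b (m + 1 - k) := fun k _ ↦ by
      congr 1
      omega
    rw [sum_congr rfl fun k hk ↦ by rw [hsub k hk]]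
    push_cast
    field_simp
    ring

theorem derivative_oneSubGeneratingSeries (b : ℕ → ℝ) (hb1 : b 1 = 1 / 2)
    (hb : ∀ n : ℕ, 2 ≤ n →
      b n = (1 / (n : ℝ)) * (1 / ((n : ℝ) + 1) -
        ∑ k ∈ Finset.range (n - 1), b (n - k - 1) / ((k : ℝ) + 2))) :
    d⁄dX ℝ (oneSubGeneratingSeries b) =
      oneSubGeneratingSeries b * -d⁄dX ℝ telescopingSeries := by
  ext n
  rw [coeff_derivative, mul_neg, map_neg, derivative_telescopingSeries, coeff_mul,
    ← Nat.sum_antidiagonal_swap, Nat.sum_antidiagonal_eq_sum_range_succ_mk, sum_range_succ]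
  have hterm : ∀ k ∈ range n, (if n - k = 0 then 1 else -b (n - k)) * (1 / ((k : ℝ) + 2))
      = -(b (n - k) / (k + 2)) := fun k hk ↦ by
    rw [if_neg (by simp at hk; omega)]
    ring
  simp only [oneSubGeneratingSeries, Prod.swap, coeff_mk, sum_congr rfl hterm, sum_neg_distrib,
    Nat.sub_self, if_true, Nat.add_one_ne_zero, if_false]
  linear_combination -(succ_mul_eq_of_recurrence b hb1 hb n)

/-- The series `Σ_{n=1}^∞ b n` converges and `Σ_{n=1}^∞ b n = 1 − 1/e`. -/
theorem hasSum_b (b : ℕ → ℝ) (hb1 : b 1 = 1 / 2)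
    (hb : ∀ n : ℕ, 2 ≤ n →
      b n = (1 / (n : ℝ)) * (1 / ((n : ℝ) + 1) -
        ∑ k ∈ Finset.range (n - 1), b (n - k - 1) / ((k : ℝ) + 2))) :
    HasSum (fun n : ℕ => b (n + 1)) (1 - 1 / Real.exp 1) := by
  have hβ : oneSubGeneratingSeries b = expNegTelescopingSeries :=
    eq_of_derivative_eq_mul (derivative_oneSubGeneratingSeries b hb1 hb)
      derivative_expNegTelescopingSeries (by simp [constantCoeff_expNegTelescopingSeries])
      (by simp [oneSubGeneratingSeries, constantCoeff_expNegTelescopingSeries])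
  have htail : HasSum (fun n ↦ coeff (n + 1) expNegTelescopingSeries) (Real.exp (-1) - 1) := by
    simpa [coeff_zero_eq_constantCoeff_apply, constantCoeff_expNegTelescopingSeries]
      using (hasSum_nat_add_iff' 1).mpr hasSum_coeff_expNegTelescopingSeries
  have hb_coeff : (fun n ↦ b (n + 1)) = fun n ↦ -coeff (n + 1) expNegTelescopingSeries := by
    ext n
    simp [← hβ, oneSubGeneratingSeries]
  rw [hb_coeff, one_div, ← Real.exp_neg, ← neg_sub]
  exact htail.neg
end
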